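/- arXiv:2211.08563 — 2 statements merged into one kernel-verified Lean document; each statement's English description precedes it below -/
import Mathlib

section
/- Let λ(x) = 3 ln x and λ* as in the paper. For all E ≥ 5: ∑_{k=1}^{λ*(E)} (λ^{(k-1)}(E))² · e^{-λ^{(k)}(E)} = ∑_{k=1}^{λ*(E)} (λ^{(k-1)}(E))^{-1} < 2. -/
open Real

noncomputable def lam (x : ℝ) : ℝ := 3 * Real.log x

noncomputable def lstar (x : ℝ) : ℕ := sInf {k : ℕ | lam^[k] x ≤ 5}

/-! Since `exp (-lam y) = y⁻¹ ^ 3`, the two sums agree term by term. For the bound, the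
tangent line of `lam` at `5` makes `lam` a `3/5`-contraction towards `75/16`, so an orbit
starting at or below `21` has at most `8` terms above `5`, contributing at most `8/5`. Above
`21`, `lam x ≤ x / 2`, so the reciprocals of those iterates grow geometrically and add up to
at most `2/21`. -/

lemma lam_le_tangent {t x : ℝ} (ht : 0 < t) (hx : 0 < x) :
    lam x ≤ 3 * x / t + 3 * (log t - 1) := by
  have h := log_le_sub_one_of_pos (div_pos hx ht)
  rw [log_div hx.ne' ht.ne'] at h
  rw [lam, mul_div_assoc]
  linarith

lemma lam_sub_le {x : ℝ} (hx : 0 < x) : lam x - 75 / 16 ≤ 3 / 5 * (x - 75 / 16) := by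
  have h := lam_le_tangent (by norm_num : (0 : ℝ) < 5) hx
  have := log_five_lt_d9
  linarith

lemma lam_le_half {x : ℝ} (hx : 21 ≤ x) : lam x ≤ x / 2 := by
  have h := lam_le_tangent (by norm_num : (0 : ℝ) < 25) (by linarith)
  have h25 : log 25 = 2 * log 5 := by
    rw [show (25 : ℝ) = 5 ^ 2 by norm_num, log_pow]
    norm_num
  have := log_five_lt_d9
  linarith

lemma lam_iterate_sub_le {x : ℝ} {k : ℕ} (h : ∀ j < k, 5 < lam^[j] x) :
    lam^[k] x - 75 / 16 ≤ (3 / 5) ^ k * (x - 75 / 16) := by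
  induction k with
  | zero => simp
  | succ k ih =>
    rw [Function.iterate_succ_apply', pow_succ']
    calc lam (lam^[k] x) - 75 / 16
        ≤ 3 / 5 * (lam^[k] x - 75 / 16) := lam_sub_le (by linarith [h k k.lt_succ_self])
      _ ≤ 3 / 5 * ((3 / 5) ^ k * (x - 75 / 16)) := by
        gcongr
        exact ih fun j hj => h j (hj.trans k.lt_succ_self)
      _ = 3 / 5 * (3 / 5) ^ k * (x - 75 / 16) := by ring

lemma exists_lam_iterate_le_five (x : ℝ) : ∃ k, lam^[k] x ≤ 5 := by
  by_contra! h
  have hx : 0 < x - 75 / 16 := by linarith [Function.iterate_zero_apply lam x ▸ h 0]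
  obtain ⟨k, hk⟩ := exists_pow_lt_of_lt_one (div_pos (by norm_num : (0 : ℝ) < 5 / 16) hx)
    (by norm_num : (3 / 5 : ℝ) < 1)
  rw [lt_div_iff₀ hx] at hk
  linarith [lam_iterate_sub_le (k := k) fun j _ => h j, h k]

lemma lam_iterate_lstar_le (x : ℝ) : lam^[lstar x] x ≤ 5 :=
  Nat.sInf_mem (exists_lam_iterate_le_five x)

lemma five_lt_lam_iterate {x : ℝ} {k : ℕ} (hk : k < lstar x) : 5 < lam^[k] x :=
  not_le.mp (Nat.notMem_of_lt_sInf hk)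

lemma lstar_eq_succ {x : ℝ} (hx : 5 < x) : lstar x = lstar (lam x) + 1 := by
  have hpos : 1 ≤ lstar x := by
    rw [Nat.one_le_iff_ne_zero, lstar, Ne, Nat.sInf_eq_zero]
    rintro (h0 | hempty)
    · exact hx.not_ge h0
    · exact Set.eq_empty_iff_forall_notMem.mp hempty _ (lam_iterate_lstar_le x)
  simpa only [lstar, Function.iterate_succ_apply] using (Nat.sInf_add hpos).symm

lemma lstar_le_eight {x : ℝ} (hx : x ≤ 21) : lstar x ≤ 8 := by
  by_contra! h
  have h8 := lam_iterate_sub_le (k := 8) fun j hj => five_lt_lam_iterate (hj.trans h)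
  have : (3 / 5 : ℝ) ^ 8 * (x - 75 / 16) ≤ (3 / 5) ^ 8 * (21 - 75 / 16) := by gcongr
  linarith [five_lt_lam_iterate h]

noncomputable def lamInvSum (x : ℝ) : ℝ := ∑ k ∈ Finset.range (lstar x), (lam^[k] x)⁻¹

lemma lamInvSum_eq_inv_add {x : ℝ} (hx : 5 < x) : lamInvSum x = x⁻¹ + lamInvSum (lam x) := by
  rw [lamInvSum, lamInvSum, lstar_eq_succ hx, Finset.sum_range_succ', add_comm]
  simp only [Function.iterate_succ_apply, Function.iterate_zero_apply]

lemma lamInvSum_le_lstar_div_five (x : ℝ) : lamInvSum x ≤ lstar x / 5 := by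
  have h := Finset.sum_le_card_nsmul (Finset.range (lstar x)) (fun k => (lam^[k] x)⁻¹) 5⁻¹
    fun k hk => inv_anti₀ (by norm_num) (five_lt_lam_iterate (Finset.mem_range.mp hk)).le
  rw [Finset.card_range, nsmul_eq_mul] at h
  rw [lamInvSum, div_eq_mul_inv]
  exact h

lemma lamInvSum_le_of_le_21 {x : ℝ} (hx : x ≤ 21) : lamInvSum x ≤ 8 / 5 := by
  have : (lstar x : ℝ) ≤ 8 := by exact_mod_cast lstar_le_eight hx
  linarith [lamInvSum_le_lstar_div_five x]

lemma lamInvSum_le_of_21_lt {x : ℝ} (hx : 21 < x) : lamInvSum x ≤ 8 / 5 + 2 / 21 - x⁻¹ := by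
  obtain ⟨n, hn⟩ : ∃ n, lstar x = n := ⟨_, rfl⟩
  induction n generalizing x with
  | zero => exact absurd (lstar_eq_succ (by linarith)) (by omega)
  | succ n ih =>
    have hinv : x⁻¹ < 21⁻¹ := inv_strictAnti₀ (by norm_num) hx
    rw [lamInvSum_eq_inv_add (by linarith)]
    rcases le_or_gt (lam x) 21 with hlam | hlam
    · linarith [lamInvSum_le_of_le_21 hlam]
    · have hhalf : 2 * x⁻¹ ≤ (lam x)⁻¹ := by
        rw [← div_eq_mul_inv, le_inv_comm₀ (by positivity) (by linarith), inv_div]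
        exact lam_le_half hx.le
      have := ih hlam (by have := lstar_eq_succ (x := x) (by linarith); omega)
      linarith

lemma lamInvSum_lt_two (x : ℝ) : lamInvSum x < 2 := by
  rcases le_or_gt x 21 with hx | hx
  · linarith [lamInvSum_le_of_le_21 hx]
  · linarith [lamInvSum_le_of_21_lt hx, inv_pos.mpr (show 0 < x by linarith)]

lemma sq_mul_exp_neg_lam {y : ℝ} (hy : 0 < y) : y ^ 2 * exp (-lam y) = y⁻¹ := by
  rw [lam, exp_neg, show 3 * log y = log (y ^ 3) by rw [log_pow]; norm_num,
    exp_log (by positivity)]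
  field_simp

theorem sum_sq_exp_eq_sum_inv_general (E : ℝ) :
    (∑ k ∈ Finset.range (lstar E),
        (lam^[k] E) ^ 2 * Real.exp (-(lam^[k + 1] E)))
      = ∑ k ∈ Finset.range (lstar E), (lam^[k] E)⁻¹ ∧
    (∑ k ∈ Finset.range (lstar E), (lam^[k] E)⁻¹) < 2 := by
  refine ⟨Finset.sum_congr rfl fun k hk => ?_, lamInvSum_lt_two E⟩
  rw [Function.iterate_succ_apply']
  exact sq_mul_exp_neg_lam (by linarith [five_lt_lam_iterate (Finset.mem_range.mp hk)])

theorem sum_sq_exp_eq_sum_inv (E : ℝ) (hE : 5 ≤ E) :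
    (∑ k ∈ Finset.range (lstar E),
        (lam^[k] E) ^ 2 * Real.exp (-(lam^[k + 1] E)))
      = ∑ k ∈ Finset.range (lstar E), (lam^[k] E)⁻¹ ∧
    (∑ k ∈ Finset.range (lstar E), (lam^[k] E)⁻¹) < 2 :=
  sum_sq_exp_eq_sum_inv_general E
end

section
/- In the setting of Lemma corethresholds: define E₀ = E and E_k = λ^{(k)}(E) + ∑_{i=0}^{k-1} 1/E_i for 1 ≤ k ≤ λ*(E), where E ≥ 5. Then λ^{(k)}(E) ≤ E_k < λ^{(k)}(E) + 2 for all 0 ≤ k ≤ λ*(E). -/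
/-!
Read backwards, an orbit of `λ` that stays above `5` is dominated from below by the orbit of
`λ⁻¹ = exp (· / 3)` started at `5`. That orbit passes `9` within four steps, and from `9` on
`λ⁻¹` at least doubles, so its reciprocals sum to at most `4/5 + 2/9 < 2`. By induction on `k`,
`E_i ≥ λ^{(i)}(E) > 5` for `i < k`, hence the correction `∑_{i<k} 1/E_i` of `E_k` lies in `[0, 2)`.
-/

open Real

noncomputable def Eseq (E : ℝ) : ℕ → ℝ
  | 0 => E
  | k + 1 => lam^[k + 1] E +
      ∑ i ∈ (Finset.range (k + 1)).attach,
        1 / Eseq E i.1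
  decreasing_by exact Finset.mem_range.mp i.2

open Finset

noncomputable def lamInv (x : ℝ) : ℝ := exp (x / 3)

lemma lamInv_monotone : Monotone lamInv :=
  fun _ _ h => exp_le_exp.mpr (by linarith)

lemma lamInv_lam {x : ℝ} (hx : 0 < x) : lamInv (lam x) = x := by
  rw [lamInv, lam, mul_div_cancel_left₀ _ three_ne_zero, exp_log hx]

lemma le_exp_div_of_pow_le {B : ℝ} {p q : ℕ} (hq : q ≠ 0) (h : B ^ q ≤ 2.7182818283 ^ p) :
    B ≤ exp (p / q) := by
  refine le_of_pow_le_pow_left₀ hq (exp_pos _).le ?_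
  rw [← exp_nat_mul, mul_div_cancel₀ _ (Nat.cast_ne_zero.mpr hq), ← exp_one_pow]
  exact h.trans (pow_le_pow_left₀ (by norm_num) exp_one_gt_d9.le p)

lemma le_lamInv_of_pow_le {a x B : ℝ} {p q : ℕ} (hq : q ≠ 0) (hpq : a / 3 = p / q)
    (h : B ^ q ≤ 2.7182818283 ^ p) (hax : a ≤ x) : B ≤ lamInv x := by
  refine (le_exp_div_of_pow_le hq h).trans ?_
  rw [← hpq]
  exact lamInv_monotone hax

lemma five_point_two_five_le_lamInv_five : 5.25 ≤ lamInv 5 :=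
  le_lamInv_of_pow_le (p := 5) (q := 3) (by norm_num) (by norm_num) (by norm_num) le_rfl

lemma nine_le_lamInv_iterate_four : 9 ≤ lamInv^[4] 5 := by
  have h1 : 5.25 ≤ lamInv^[1] 5 := five_point_two_five_le_lamInv_five
  have h2 : 5.7 ≤ lamInv^[2] 5 :=
    le_lamInv_of_pow_le (p := 7) (q := 4) (by norm_num) (by norm_num) (by norm_num) h1
  have h3 : 6.6 ≤ lamInv^[3] 5 :=
    le_lamInv_of_pow_le (p := 19) (q := 10) (by norm_num) (by norm_num) (by norm_num) h2
  exact le_lamInv_of_pow_le (p := 11) (q := 5) (by norm_num) (by norm_num) (by norm_num) h3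

lemma two_mul_le_lamInv {x : ℝ} (hx : 9 ≤ x) : 2 * x ≤ lamInv x := by
  have h20 : (20 : ℝ) ≤ exp 3 := by
    simpa using le_exp_div_of_pow_le (p := 3) (q := 1) one_ne_zero (by norm_num)
  have hsplit : lamInv x = exp 3 * exp ((x - 9) / 3) := by
    rw [lamInv, ← exp_add]; ring_nf
  have htangent : 1 + (x - 9) / 3 ≤ exp ((x - 9) / 3) := by
    linarith [add_one_le_exp ((x - 9) / 3)]
  rw [hsplit]
  nlinarith [mul_le_mul h20 htangent (by linarith) (exp_pos 3).le]

lemma five_le_lamInv_iterate (j : ℕ) : 5 ≤ lamInv^[j] 5 := by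
  have h : (5 : ℝ) ≤ lamInv 5 := le_trans (by norm_num) five_point_two_five_le_lamInv_five
  exact lamInv_monotone.monotone_iterate_of_le_map h (Nat.zero_le j)

lemma nine_mul_two_pow_le_lamInv_iterate (m : ℕ) : 9 * 2 ^ m ≤ lamInv^[m + 4] 5 := by
  induction m with
  | zero => simpa using nine_le_lamInv_iterate_four
  | succ m ih =>
    rw [add_right_comm, Function.iterate_succ_apply', pow_succ]
    have h9 : 9 ≤ lamInv^[m + 4] 5 := le_trans (by simp [one_le_pow₀]) ih
    linarith [two_mul_le_lamInv h9]

lemma sum_inv_lamInv_iterate_lt_two (n : ℕ) : ∑ j ∈ range n, 1 / lamInv^[j] 5 < 2 := by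
  have hpos (j : ℕ) : 0 < lamInv^[j] 5 := by linarith [five_le_lamInv_iterate j]
  have hhead : ∑ j ∈ range 4, 1 / lamInv^[j] 5 ≤ 4 / 5 := by
    have hle (j : ℕ) : 1 / lamInv^[j] 5 ≤ 1 / 5 :=
      one_div_le_one_div_of_le (by norm_num) (five_le_lamInv_iterate j)
    simp only [sum_range_succ, sum_range_zero]
    linarith [hle 0, hle 1, hle 2, hle 3]
  have htail : ∑ m ∈ range n, 1 / lamInv^[4 + m] 5 ≤ 2 / 9 :=
    calc ∑ m ∈ range n, 1 / lamInv^[4 + m] 5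
        ≤ ∑ m ∈ range n, 1 / 9 * (1 / 2 : ℝ) ^ m := by
          gcongr with m
          rw [add_comm, div_pow, one_pow, one_div_mul_one_div]
          exact one_div_le_one_div_of_le (by positivity) (nine_mul_two_pow_le_lamInv_iterate m)
      _ ≤ 1 / 9 * 2 := by rw [← mul_sum]; gcongr; exact sum_geometric_two_le n
      _ = 2 / 9 := by norm_num
  calc ∑ j ∈ range n, 1 / lamInv^[j] 5
      ≤ ∑ j ∈ range (4 + n), 1 / lamInv^[j] 5 :=
        sum_le_sum_of_subset_of_nonneg (range_mono (by omega))
          fun j _ _ => (one_div_pos.mpr (hpos j)).le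
    _ = ∑ j ∈ range 4, 1 / lamInv^[j] 5 + ∑ m ∈ range n, 1 / lamInv^[4 + m] 5 :=
        sum_range_add _ 4 n
    _ < 2 := by linarith

lemma lamInv_iterate_le_of_five_le_lam_iterate {x : ℝ} (j : ℕ) (h : ∀ k ≤ j, 5 ≤ lam^[k] x) :
    lamInv^[j] 5 ≤ x := by
  induction j generalizing x with
  | zero => simpa using h 0 le_rfl
  | succ j ih =>
    have hlam : lamInv^[j] 5 ≤ lam x := ih fun k hk => by
      simpa only [Function.iterate_succ_apply] using h (k + 1) (by omega)
    have hx : 0 < x := by linarith [Function.iterate_zero_apply lam x ▸ h 0 (Nat.zero_le _)]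
    rw [Function.iterate_succ_apply', ← lamInv_lam hx]
    exact lamInv_monotone hlam

lemma sum_inv_lam_iterate_lt_two {y : ℝ} {n : ℕ} (h : ∀ i < n, 5 ≤ lam^[i] y) :
    ∑ i ∈ range n, 1 / lam^[i] y < 2 :=
  calc ∑ i ∈ range n, 1 / lam^[i] y
      = ∑ j ∈ range n, 1 / lam^[n - 1 - j] y := (sum_range_reflect _ n).symm
    _ ≤ ∑ j ∈ range n, 1 / lamInv^[j] 5 := by
        gcongr with j hj
        · linarith [five_le_lamInv_iterate j]
        · refine lamInv_iterate_le_of_five_le_lam_iterate j fun k hk => ?_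
          rw [← Function.iterate_add_apply]
          exact h _ (by simp only [mem_range] at hj; omega)
    _ < 2 := sum_inv_lamInv_iterate_lt_two n

lemma five_lt_lam_iterate_of_lt_lstar {x : ℝ} {i : ℕ} (hi : i < lstar x) : 5 < lam^[i] x :=
  not_le.mp (Nat.notMem_of_lt_sInf hi)

lemma Eseq_succ (E : ℝ) (k : ℕ) :
    Eseq E (k + 1) = lam^[k + 1] E + ∑ i ∈ range (k + 1), 1 / Eseq E i := by
  rw [Eseq, sum_attach (range (k + 1)) (fun i => 1 / Eseq E i)]

theorem Eseq_bounds_general (E : ℝ) :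
    ∀ k : ℕ, k ≤ lstar E →
      lam^[k] E ≤ Eseq E k ∧ Eseq E k < lam^[k] E + 2 := by
  intro k
  induction k using Nat.strong_induction_on with
  | _ k ih =>
    intro hk
    rcases k with _ | k
    · simp [Eseq]
    have h5 (i : ℕ) (hi : i ∈ range (k + 1)) : 5 < lam^[i] E :=
      five_lt_lam_iterate_of_lt_lstar (by simp only [mem_range] at hi; omega)
    have hlow (i : ℕ) (hi : i ∈ range (k + 1)) : lam^[i] E ≤ Eseq E i :=
      (ih i (mem_range.mp hi) (by simp only [mem_range] at hi; omega)).1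
    have hpos (i : ℕ) (hi : i ∈ range (k + 1)) : 0 < lam^[i] E := by linarith [h5 i hi]
    have hnonneg : 0 ≤ ∑ i ∈ range (k + 1), 1 / Eseq E i :=
      sum_nonneg fun i hi => (one_div_pos.mpr ((hpos i hi).trans_le (hlow i hi))).le
    have hlt : ∑ i ∈ range (k + 1), 1 / Eseq E i < 2 :=
      (sum_le_sum fun i hi => one_div_le_one_div_of_le (hpos i hi) (hlow i hi)).trans_lt
        (sum_inv_lam_iterate_lt_two fun i hi => (h5 i (mem_range.mpr hi)).le)
    rw [Eseq_succ]
    constructor <;> linarith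

theorem Eseq_bounds (E : ℝ) (hE : 5 ≤ E) :
    ∀ k : ℕ, k ≤ lstar E →
      lam^[k] E ≤ Eseq E k ∧ Eseq E k < lam^[k] E + 2 :=
  Eseq_bounds_general E
end
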